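/- Let c be the complex Banach space of convergent sequences with the supremum norm, and let L ∈ c* be the norm-one functional L((c_n)_n) = lim_{n→∞} c_n. If ε > 0 and S : c → c is a finite rank bounded linear operator with ‖(S* - I_{c*})L‖ < ε, then ‖S - I_c‖ ≥ 2 - ε. -/

import Mathlib

open Metric Filter Topology

namespace ClusterValue

variable (X : Type*) [NormedAddCommGroup X] [NormedSpace ℂ X]

/-- Membership in `A_u(B)`: analytic on the open unit ball, bounded there,
and uniformly continuous there. -/
def MemAu (f : X → ℂ) : Prop :=
  AnalyticOn ℂ f (ball (0 : X) 1) ∧ (∃ C : ℝ, ∀ x ∈ ball (0 : X) 1, ‖f x‖ ≤ C) ∧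
    UniformContinuousOn f (ball (0 : X) 1)

/-- Membership in `H^∞(B)`: analytic on the open unit ball and bounded there. -/
def MemHinf (f : X → ℂ) : Prop :=
  AnalyticOn ℂ f (ball (0 : X) 1) ∧ (∃ C : ℝ, ∀ x ∈ ball (0 : X) 1, ‖f x‖ ≤ C)

/-- A character (nonzero continuous multiplicative linear functional) of the algebra
of functions on the open unit ball of `X` determined by the membership predicate `Mem`.
Functions are identified when they agree on the ball. -/
structure Character (Mem : (X → ℂ) → Prop) : Type _ where
  toFun : (X → ℂ) → ℂ
  congr' : ∀ f g, Mem f → Mem g → (∀ x ∈ ball (0 : X) 1, f x = g x) → toFun f = toFun g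
  map_add' : ∀ f g, Mem f → Mem g → toFun (f + g) = toFun f + toFun g
  map_mul' : ∀ f g, Mem f → Mem g → toFun (f * g) = toFun f * toFun g
  map_smul' : ∀ (c : ℂ) (f), Mem f → toFun (c • f) = c * toFun f
  map_one' : toFun 1 = 1
  continuous' : ∃ C : ℝ, ∀ (f : X → ℂ) (M : ℝ), Mem f →
    (∀ x ∈ ball (0 : X) 1, ‖f x‖ ≤ M) → ‖toFun f‖ ≤ C * M

variable {X}

/-- The fiber over `0`: characters annihilating all continuous linear functionals. -/
def Character.inFiberZero {Mem : (X → ℂ) → Prop} (τ : Character X Mem) : Prop :=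
  ∀ φ : X →L[ℂ] ℂ, τ.toFun ⇑φ = 0

/-- The fiber over `x'' ∈ X**`. -/
def Character.inFiber {Mem : (X → ℂ) → Prop} (τ : Character X Mem)
    (x'' : (X →L[ℂ] ℂ) →L[ℂ] ℂ) : Prop :=
  ∀ φ : X →L[ℂ] ℂ, τ.toFun ⇑φ = x'' φ

variable (X)

/-- The cluster set of `f` at `0`: limits of `f` along weakly null nets (filters) in the ball. -/
def clusterSetZero (f : X → ℂ) : Set ℂ :=
  {z | ∃ l : Filter X, l.NeBot ∧ l ≤ 𝓟 (ball (0 : X) 1) ∧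
    (∀ φ : X →L[ℂ] ℂ, Tendsto (fun x => φ x) l (𝓝 0)) ∧ Tendsto f l (𝓝 z)}

/-- The cluster set of `f` at `x'' ∈ X**`: limits of `f` along nets in the ball converging
weak-star to `x''`. -/
def clusterSet (f : X → ℂ) (x'' : (X →L[ℂ] ℂ) →L[ℂ] ℂ) : Set ℂ :=
  {z | ∃ l : Filter X, l.NeBot ∧ l ≤ 𝓟 (ball (0 : X) 1) ∧
    (∀ φ : X →L[ℂ] ℂ, Tendsto (fun x => φ x) l (𝓝 (x'' φ))) ∧ Tendsto f l (𝓝 z)}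

/-- A finite rank (bounded linear) operator. -/
def FiniteRank (S : X →L[ℂ] X) : Prop :=
  FiniteDimensional ℂ ↥(LinearMap.range (S : X →ₗ[ℂ] X))

/-- Finite type polynomials: the subalgebra of functions generated by the
continuous linear functionals (and constants). -/
def IsFiniteTypePoly (p : X → ℂ) : Prop :=
  p ∈ Algebra.adjoin ℂ (Set.range fun φ : X →L[ℂ] ℂ => (⇑φ : X → ℂ))

/-- Membership in `A(B)`: uniform limits on the ball of finite type polynomials. -/
def MemA (f : X → ℂ) : Prop :=
  ∀ ε > (0 : ℝ), ∃ p : X → ℂ, IsFiniteTypePoly X p ∧ ∀ x ∈ ball (0 : X) 1, ‖f x - p x‖ ≤ ε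

/-- A continuous polynomial: a finite sum of (diagonals of) continuous multilinear maps. -/
def IsContPoly (p : X → ℂ) : Prop :=
  ∃ (N : ℕ) (M : ∀ k : ℕ, ContinuousMultilinearMap ℂ (fun _ : Fin k => X) ℂ),
    ∀ x, p x = ∑ k ∈ Finset.range N, M k (fun _ => x)

end ClusterValue

namespace ClusterValue

open Filter Topology ENNReal

/-- The space `c` of convergent sequences, as a (closed) subspace of `ℓ∞`. -/
noncomputable def convSeq : Submodule ℂ (lp (fun _ : ℕ => ℂ) ∞) where
  carrier := {x | ∃ l : ℂ, Tendsto (fun n => x n) atTop (𝓝 l)}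
  add_mem' := by
    rintro x y ⟨l, hl⟩ ⟨m, hm⟩
    exact ⟨l + m, by simpa using hl.add hm⟩
  zero_mem' := ⟨0, by simp [tendsto_const_nhds]⟩
  smul_mem' := by
    rintro c x ⟨l, hl⟩
    refine ⟨c * l, ?_⟩
    simpa using (hl.const_mul c)

end ClusterValue

/-! The sign vectors `x_N = (-1, …, -1, 1, 1, …)` (with `N` entries `-1`) lie in the unit ball of
`c` and have limit `1`. As `S` has finite rank, `S x_N` converges along a subsequence to some
`v ∈ c`, and then `|lim v - 1| ≤ ‖S* L - L‖ < ε`. For each fixed `n` the `n`-th coordinate of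
`(S - I) x_N` is eventually `(S x_N)_n + 1`, which tends to `v_n + 1`; hence
`‖S - I‖ ≥ |v_n + 1| → |lim v + 1| ≥ 2 - ε`. -/

section OperatorBounds

open Filter Topology

variable {𝕜 E F ι : Type*} [NontriviallyNormedField 𝕜] [NormedAddCommGroup E] [NormedSpace 𝕜 E]
  [NormedAddCommGroup F] [NormedSpace 𝕜 F] {l : Filter ι} [l.NeBot]

theorem ContinuousLinearMap.norm_le_opNorm_of_tendsto {A : E →L[𝕜] F} {x : ι → E}
    (hx : ∀ k, ‖x k‖ ≤ 1) {a : F} (hA : Tendsto (fun k => A (x k)) l (𝓝 a)) : ‖a‖ ≤ ‖A‖ :=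
  le_of_tendsto hA.norm <| Eventually.of_forall fun k =>
    (A.le_opNorm (x k)).trans (mul_le_of_le_one_right (norm_nonneg A) (hx k))

theorem norm_apply_sub_one_le_of_tendsto (L : E →L[𝕜] 𝕜) (S : E →L[𝕜] E) {x : ι → E}
    (hx : ∀ k, ‖x k‖ ≤ 1) (hLx : ∀ k, L (x k) = 1) {v : E}
    (hv : Tendsto (fun k => S (x k)) l (𝓝 v)) : ‖L v - 1‖ ≤ ‖L.comp S - L‖ := by
  refine (L.comp S - L).norm_le_opNorm_of_tendsto (l := l) hx ?_
  simpa [hLx] using ((L.continuous.tendsto v).comp hv).sub_const 1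

theorem norm_apply_add_one_le_of_tendsto {φ : E →L[𝕜] 𝕜} (hφ : ‖φ‖ ≤ 1) (S : E →L[𝕜] E)
    {x : ι → E} (hx : ∀ k, ‖x k‖ ≤ 1) (hφx : ∀ᶠ k in l, φ (x k) = -1) {v : E}
    (hv : Tendsto (fun k => S (x k)) l (𝓝 v)) :
    ‖φ v + 1‖ ≤ ‖S - ContinuousLinearMap.id 𝕜 E‖ := by
  have hlim : Tendsto (fun k => (φ.comp (S - ContinuousLinearMap.id 𝕜 E)) (x k)) l
      (𝓝 (φ v + 1)) := by
    refine (((φ.continuous.tendsto v).comp hv).add_const 1).congr' ?_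
    filter_upwards [hφx] with k hk
    simp [hk, sub_eq_add_neg]
  calc ‖φ v + 1‖ ≤ ‖φ.comp (S - ContinuousLinearMap.id 𝕜 E)‖ :=
        ContinuousLinearMap.norm_le_opNorm_of_tendsto hx hlim
    _ ≤ ‖φ‖ * ‖S - ContinuousLinearMap.id 𝕜 E‖ := ContinuousLinearMap.opNorm_comp_le _ _
    _ ≤ ‖S - ContinuousLinearMap.id 𝕜 E‖ := mul_le_of_le_one_left (norm_nonneg _) hφ

end OperatorBounds

namespace ClusterValue

open Metric Filter Topology ENNReal

theorem FiniteRank.exists_tendsto_subseq {X : Type*} [NormedAddCommGroup X] [NormedSpace ℂ X]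
    {S : X →L[ℂ] X} (hS : FiniteRank X S) {x : ℕ → X} {R : ℝ} (hx : ∀ k, ‖x k‖ ≤ R) :
    ∃ v : X, ∃ ψ : ℕ → ℕ, StrictMono ψ ∧ Tendsto (fun k => S (x (ψ k))) atTop (𝓝 v) := by
  have : FiniteDimensional ℂ (LinearMap.range (S : X →ₗ[ℂ] X)) := hS
  have : ProperSpace (LinearMap.range (S : X →ₗ[ℂ] X)) := FiniteDimensional.proper ℂ _
  let y : ℕ → LinearMap.range (S : X →ₗ[ℂ] X) := fun k => ⟨S (x k), LinearMap.mem_range_self _ _⟩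
  have hy : ∀ k, y k ∈ closedBall 0 (‖S‖ * R) := fun k => by
    rw [mem_closedBall_zero_iff]
    exact S.le_opNorm_of_le (hx k)
  obtain ⟨a, -, ψ, hψ, hlim⟩ := (isCompact_closedBall _ _).tendsto_subseq hy
  exact ⟨a, ψ, hψ, (continuous_subtype_val.tendsto a).comp hlim⟩

namespace convSeq

noncomputable def coord (n : ℕ) : convSeq →L[ℂ] ℂ :=
  (lp.evalCLM ℂ (fun _ : ℕ => ℂ) ∞ n).comp convSeq.subtypeL

@[simp]
theorem coord_apply (n : ℕ) (y : convSeq) : coord n y = (y : lp (fun _ : ℕ => ℂ) ∞) n := rfl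

theorem norm_coord_le (n : ℕ) : ‖coord n‖ ≤ 1 :=
  (ContinuousLinearMap.opNorm_comp_le _ _).trans <| mul_le_one₀
    (LinearMap.mkContinuous_norm_le _ zero_le_one _) (norm_nonneg convSeq.subtypeL)
    (Submodule.norm_subtypeL_le _)

theorem tendsto_sign (N : ℕ) :
    Tendsto (fun n : ℕ => if n < N then (-1 : ℂ) else 1) atTop (𝓝 1) :=
  tendsto_const_nhds.congr' <| (eventually_ge_atTop N).mono fun n hn => by
    simp [Nat.not_lt.mpr hn]

theorem memℓp_sign (N : ℕ) : Memℓp (fun n : ℕ => if n < N then (-1 : ℂ) else 1) ∞ :=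
  memℓp_infty ⟨1, by rintro _ ⟨n, rfl⟩; dsimp only; split_ifs <;> simp⟩

noncomputable def signVec (N : ℕ) : convSeq := ⟨⟨_, memℓp_sign N⟩, 1, tendsto_sign N⟩

theorem signVec_apply (N n : ℕ) :
    (signVec N : lp (fun _ : ℕ => ℂ) ∞) n = if n < N then -1 else 1 := rfl

theorem norm_signVec_le (N : ℕ) : ‖signVec N‖ ≤ 1 := by
  refine lp.norm_le_of_forall_le' (f := (signVec N : lp (fun _ : ℕ => ℂ) ∞)) 1 fun n => ?_
  rw [signVec_apply]
  split_ifs <;> simp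

end convSeq

end ClusterValue

open Metric Filter Topology ENNReal ClusterValue convSeq in
theorem statement6 (ε : ℝ)
    (L : ↥convSeq →L[ℂ] ℂ)
    (hL : ∀ (x : ↥convSeq) (l : ℂ),
      Tendsto (fun n => (x : lp (fun _ : ℕ => ℂ) ∞) n) atTop (𝓝 l) → L x = l)
    (S : ↥convSeq →L[ℂ] ↥convSeq) (hS : FiniteRank ↥convSeq S)
    (hSL : ‖L.comp S - L‖ < ε) :
    2 - ε ≤ ‖S - ContinuousLinearMap.id ℂ ↥convSeq‖ := by
  obtain ⟨v, ψ, hψ, hv⟩ := hS.exists_tendsto_subseq norm_signVec_le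
  obtain ⟨a, ha⟩ := v.2
  have ha_sub : ‖a - 1‖ ≤ ‖L.comp S - L‖ :=
    hL v a ha ▸ norm_apply_sub_one_le_of_tendsto L S (fun k => norm_signVec_le _)
      (fun k => hL _ 1 (tendsto_sign _)) hv
  have hcoord_add : ∀ n, ‖(v : lp (fun _ : ℕ => ℂ) ∞) n + 1‖ ≤ ‖S - ContinuousLinearMap.id ℂ _‖ :=
    fun n => norm_apply_add_one_le_of_tendsto (norm_coord_le n) S (fun k => norm_signVec_le _)
      ((hψ.tendsto_atTop.eventually (eventually_gt_atTop n)).mono fun k hk => by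
        simp [signVec_apply, hk]) hv
  have ha_add : ‖a + 1‖ ≤ ‖S - ContinuousLinearMap.id ℂ _‖ :=
    le_of_tendsto (ha.add_const 1).norm (Eventually.of_forall hcoord_add)
  calc 2 - ε ≤ ‖(a + 1) - (a - 1)‖ - ‖a - 1‖ := by norm_num; linarith
    _ ≤ ‖a + 1‖ := by linarith [norm_sub_le (a + 1) (a - 1)]
    _ ≤ _ := ha_add
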